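/- arXiv:1009.3476 — 3 statements merged into one kernel-verified Lean document; each statement's English description precedes it below -/
import Mathlib

section
/- For η ∈ I_n define permutations of {1,…,n} recursively by p_η^{[n]} := id and p_η^{[i]} := p_η^{[i+1]}∘(i, (p_η^{[i+1]})⁻¹(η(i))) for i = n−1, n−2, …, 1, and set p_η := p_η^{[1]}. Then for arbitrary n×n matrices C_1,…,C_n over A, ⟨⟨C_1,…,C_n⟩⟩ = ∑_{η∈I_n} α(η)·P_{p_η⁻¹}·C_1^(η(1))·C_2^(η(2))⋯C_n^(η(n)). -/
/-!
Write `Π_k = ∑_{j ≥ k} c_{kj} P_{kj}` with `c_{kk} = 1` and expand the product. Moving a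
permutation operator to the left past a factor relabels it, `C^{(s)} P_σ = P_σ C^{(σ⁻¹ s)}`, so by
descending induction on `k` the partial product `C_k^{(k)} Π_k ⋯ Π_{n-1} C_n^{(n)}` is the sum, over
the `η ∈ I_n` fixing every `i < k`, of `α(η) P_{(p_η^{[k]})⁻¹} C_k^{(η(k))} ⋯ C_n^{(η(n))}`.
In the inductive step the choice `j ≥ k` of the summand of `Π_k` corresponds to
`η(k) = p_η^{[k+1]}(j)`: since `p_η^{[k+1]}` fixes `1, …, k`, this is a bijection of `{k, …, n}`
fixing `k`, so it preserves `c_{kj}`, which is exactly the factor `α` gains at position `k`, and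
`p_η^{[k]} = p_η^{[k+1]} ∘ (k, j)`.
-/

noncomputable section

abbrev K : Type := RatFunc ℚ

def u : K := RatFunc.X

/-- Operators on the n-fold tensor power of K^n with coefficients in A. -/
abbrev Op (A : Type*) (n : ℕ) := Matrix (Fin n → Fin n) (Fin n → Fin n) A

variable {A : Type*} [Ring A] [Algebra K A] {n : ℕ}

/-- `act C s` = C^(s): the matrix C acting on the s-th tensor factor. -/
def act (C : Matrix (Fin n) (Fin n) A) (s : Fin n) : Op A n :=
  fun f g => if ∀ t, t ≠ s → f t = g t then C (f s) (g s) else 0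

/-- `Pop σ` = P_σ: permutation of the tensor factors according to σ. -/
def Pop (σ : Equiv.Perm (Fin n)) : Op A n :=
  fun f g => if f = g ∘ ⇑σ⁻¹ then (1 : A) else 0

/-- P_{ij} (with P_{ii} = Id). -/
def Pij (i j : Fin n) : Op A n := Pop (Equiv.swap i j)

/-- Π_k = 1 − (2u−k−n+2)⁻¹ ∑_{i=k+1}^n P_{ki}, with label k+1. -/
def Piop (k : Fin n) : Op A n :=
  (1 : Op A n) -
    ((2 * u - ((k : ℕ) + 1 : K) - (n : K) + 2)⁻¹ : K) •
      ∑ i ∈ Finset.univ.filter (fun i => k < i), Pij k i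

/-- ⟨⟨C_1,…,C_n⟩⟩ = C_1^(1)·Π_1·C_2^(2)·Π_2⋯Π_{n−1}·C_n^(n). -/
def braket (C : Fin n → Matrix (Fin n) (Fin n) A) : Op A n :=
  ((List.finRange n).map (fun s => act (C s) s * Piop s)).prod

/-- I_n: the tuples η with i ≤ η(i) for all i. -/
def In (n : ℕ) : Finset (Fin n → Fin n) :=
  Finset.univ.filter (fun η => ∀ i, i ≤ η i)

/-- α(η) = ∏_{i : i < η(i)} (n−2u−2+i)⁻¹, with label i+1. -/
def alphaK (η : Fin n → Fin n) : K :=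
  ∏ i ∈ Finset.univ.filter (fun i => i < η i), ((n : K) - 2 * u - 2 + ((i : ℕ) + 1 : K))⁻¹

/-- `pAux η t` = p_η^{[n−t]}: p_η^{[n]} = id and
p_η^{[i]} = p_η^{[i+1]}∘(i, (p_η^{[i+1]})⁻¹(η(i))); the point of `Fin n` with
value `n−2−t` carries the label `n−t−1`. (For n ≥ 1 the guard always holds.) -/
def pAux (η : Fin n → Fin n) : ℕ → Equiv.Perm (Fin n)
  | 0 => 1
  | t + 1 =>
    let prev := pAux η t
    if h : n - 2 - t < n then
      prev * Equiv.swap ⟨n - 2 - t, h⟩ (prev⁻¹ (η ⟨n - 2 - t, h⟩))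
    else prev

/-- p_η = p_η^{[1]}. -/
def pEta (η : Fin n → Fin n) : Equiv.Perm (Fin n) := pAux η (n - 1)

lemma List.drop_finRange_eq_cons (k : Fin n) :
    (List.finRange n).drop k = k :: (List.finRange n).drop (k + 1) := by
  rw [List.drop_eq_getElem_cons (by simp), List.getElem_finRange]
  rfl

lemma List.le_of_mem_drop_finRange {m : ℕ} {s : Fin n} (hs : s ∈ (List.finRange n).drop m) :
    m ≤ s := by
  obtain ⟨i, hi, rfl⟩ := List.mem_iff_getElem.1 hs
  simp

section PermutationOperators

variable {R : Type*} [Ring R]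

lemma Pop_eq_permMatrix (σ : Equiv.Perm (Fin n)) :
    (Pop σ : Op R n) = Equiv.Perm.permMatrix R (σ.symm.arrowCongr (Equiv.refl (Fin n))) := by
  have relabel : ∀ f, σ.symm.arrowCongr (Equiv.refl (Fin n)) f = f ∘ σ := fun f => by ext; simp
  ext f g
  simp [Pop, relabel, Equiv.eq_comp_symm]

lemma Pop_one : (Pop 1 : Op R n) = 1 := by
  ext f g
  simp [Pop, Matrix.one_apply]

lemma Pop_mul (σ ρ : Equiv.Perm (Fin n)) : (Pop σ * Pop ρ : Op R n) = Pop (σ * ρ) := by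
  simp only [Pop_eq_permMatrix, ← Matrix.permMatrix_mul]
  congr 1

lemma act_mul_Pop (C : Matrix (Fin n) (Fin n) R) (s : Fin n) (σ : Equiv.Perm (Fin n)) :
    act C s * Pop σ = Pop σ * act C (σ⁻¹ s) := by
  rw [Pop_eq_permMatrix, PEquiv.mul_toMatrix_toPEquiv, PEquiv.toMatrix_toPEquiv_mul]
  ext f g
  simp only [Matrix.submatrix_apply, act, id, Equiv.arrowCongr_apply]
  refine if_congr ?_ (by simp [Equiv.Perm.inv_def]) rfl
  rw [σ.symm.forall_congr_left]
  simp [Equiv.Perm.inv_def, ← Equiv.eq_symm_apply]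

lemma act_mul_Pop_swap_mul (C : Matrix (Fin n) (Fin n) R) (k j : Fin n)
    (q : Equiv.Perm (Fin n)) (X : Op R n) :
    act C k * Pop (Equiv.swap k j) * (Pop q⁻¹ * X) =
      Pop (q * Equiv.swap k j)⁻¹ * (act C (q j) * X) := by
  rw [← mul_assoc, mul_assoc (act C k), Pop_mul, act_mul_Pop, mul_assoc, mul_inv_rev,
    Equiv.swap_inv]
  simp

lemma prod_drop_succ_map_act_update (C : Fin n → Matrix (Fin n) (Fin n) R)
    (η : Fin n → Fin n) (k j : Fin n) :
    (((List.finRange n).drop (k + 1)).map fun s => act (C s) (Function.update η k j s)).prod =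
      (((List.finRange n).drop (k + 1)).map fun s => act (C s) (η s)).prod := by
  refine congrArg _ (List.map_congr_left fun s hs => ?_)
  have := List.le_of_mem_drop_finRange hs
  rw [Function.update_of_ne (by omega)]

end PermutationOperators

lemma Equiv.Perm.le_apply_of_forall_lt {α : Type*} [LinearOrder α] {q : Equiv.Perm α} {k : α}
    (hq : ∀ x < k, q x = x) {j : α} (hj : k ≤ j) : k ≤ q j := by
  by_contra hlt
  rw [not_le] at hlt
  rw [q.injective (hq _ hlt)] at hlt
  exact hlt.not_ge hj

lemma Equiv.Perm.sum_Ici_comp {α M : Type*} [LinearOrder α] [LocallyFiniteOrderTop α]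
    [AddCommMonoid M] {q : Equiv.Perm α} {k : α} (hq : ∀ x < k, q x = x) (f : α → M) :
    ∑ j ∈ Finset.Ici k, f (q j) = ∑ j ∈ Finset.Ici k, f j :=
  q.sum_comp _ f fun x hx => Finset.mem_Ici.2 (not_lt.1 fun hlt => hx (hq x hlt))

def piCoeff (k j : Fin n) : K :=
  if j = k then 1 else ((n : K) - 2 * u - 2 + ((k : ℕ) + 1 : K))⁻¹

lemma Piop_eq_sum (k : Fin n) :
    (Piop k : Op A n) = ∑ j ∈ Finset.Ici k, piCoeff k j • Pop (Equiv.swap k j) := by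
  rw [← Finset.Ioi_insert, Finset.sum_insert Finset.notMem_Ioi_self, Piop, Finset.filter_lt_eq_Ioi,
    piCoeff, if_pos rfl, Equiv.swap_self, ← Equiv.Perm.one_def, Pop_one, one_smul, sub_eq_add_neg,
    ← neg_smul, Finset.smul_sum]
  refine congrArg _ (Finset.sum_congr rfl fun j hj => ?_)
  rw [piCoeff, if_neg (Finset.mem_Ioi.1 hj).ne', Pij, ← inv_neg]
  congr 2
  ring

lemma piCoeff_perm_apply {k : Fin n} {q : Equiv.Perm (Fin n)} (hq : q k = k) (j : Fin n) :
    piCoeff k (q j) = piCoeff k j := by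
  simp only [piCoeff, q.injective.eq_iff' hq]

lemma alphaK_update {η : Fin n → Fin n} {k j : Fin n} (hk : η k = k) (hj : k ≤ j) :
    alphaK (Function.update η k j) = piCoeff k j * alphaK η := by
  rcases hj.eq_or_lt with rfl | hlt
  · rw [piCoeff, if_pos rfl, one_mul]
    nth_rw 2 [← hk]
    rw [Function.update_eq_self]
  · have hset : Finset.univ.filter (fun i => i < Function.update η k j i) =
        insert k (Finset.univ.filter (fun i => i < η i)) := by
      ext i
      by_cases hi : i = k
      · subst hi; simp [hlt]
      · simp [hi]
    rw [alphaK, hset, Finset.prod_insert (by simp [hk]), piCoeff, if_neg hlt.ne', alphaK]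

lemma mem_In {η : Fin n → Fin n} : η ∈ In n ↔ ∀ i, i ≤ η i := by
  simp [In]

def InFrom (n k : ℕ) : Finset (Fin n → Fin n) :=
  (In n).filter fun η => ∀ i : Fin n, (i : ℕ) < k → η i = i

lemma InFrom_zero : InFrom n 0 = In n :=
  Finset.filter_true_of_mem fun _ _ _ hi => absurd hi (Nat.not_lt_zero _)

lemma InFrom_self : InFrom n n = {id} := by
  ext η
  simp only [InFrom, mem_In, Finset.mem_filter, Finset.mem_singleton, Fin.is_lt, forall_const]
  constructor
  · exact fun h => funext h.2
  · rintro rfl; exact ⟨fun _ => le_rfl, fun _ => rfl⟩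

lemma sum_InFrom_eq_sum_update {M : Type*} [AddCommMonoid M] (k : Fin n)
    (F : (Fin n → Fin n) → M) :
    ∑ η ∈ InFrom n k, F η =
      ∑ η ∈ InFrom n (k + 1), ∑ j ∈ Finset.Ici k, F (Function.update η k j) := by
  rw [← Finset.sum_product']
  refine Finset.sum_nbij' (fun η => (Function.update η k k, η k))
    (fun p => Function.update p.1 k p.2) ?_ ?_ ?_ ?_ fun _ _ => by simp
  all_goals simp only [InFrom, mem_In, Finset.mem_filter, Finset.mem_product, Finset.mem_Ici,
    Prod.forall, Prod.mk.injEq, Function.update_apply]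
  all_goals grind

/-- `pFrom η k` is the paper's `p_η^{[k+1]}`: positions are 0-based here. -/
def pFrom (η : Fin n → Fin n) (k : ℕ) : Equiv.Perm (Fin n) := pAux η (n - k - 1)

lemma pFrom_zero (η : Fin n → Fin n) : pFrom η 0 = pEta η := rfl

lemma pFrom_self (η : Fin n → Fin n) : pFrom η n = 1 := by
  rw [pFrom, Nat.sub_self, Nat.zero_sub, pAux]

lemma pFrom_eq_mul_swap {η : Fin n → Fin n} (hη : ∀ i, i ≤ η i) (k : Fin n) :
    pFrom η k = pFrom η (k + 1) * Equiv.swap k ((pFrom η (k + 1))⁻¹ (η k)) := by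
  rcases Nat.lt_or_ge (k + 1) n with hk | hk
  · have hsucc : n - k - 1 = n - (k + 1) - 1 + 1 := by omega
    have hpos : n - 2 - (n - (k + 1) - 1) = k := by omega
    rw [pFrom, pFrom, hsucc, pAux, dif_pos (by omega)]
    simp only [hpos]
  · -- at the last position the paper's factor `(n, η(n))` is trivial, and `pAux` omits it
    have hlast : η k = k := le_antisymm (Fin.le_def.2 (by omega)) (hη k)
    have hzero : n - (k + 1) - 1 = 0 := by omega
    rw [hlast, pFrom, pFrom, hzero, show n - k - 1 = 0 by omega, pAux, inv_one,
      Equiv.Perm.one_apply, Equiv.swap_self]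
    rfl

lemma pFrom_apply_of_lt {η : Fin n → Fin n} (hη : ∀ i, i ≤ η i) {k : ℕ} (hk : k ≤ n)
    {x : Fin n} (hx : (x : ℕ) < k) : pFrom η k x = x := by
  induction hk using Nat.decreasingInduction generalizing x with
  | self => rw [pFrom_self, Equiv.Perm.one_apply]
  | of_succ k hk ih =>
    have hq : pFrom η (k + 1) x = x := ih (by omega)
    have hne : x ≠ (pFrom η (k + 1))⁻¹ (η ⟨k, hk⟩) := by
      rw [Ne, Equiv.Perm.eq_inv_iff_eq, hq]
      exact fun h => absurd (Fin.le_def.1 (h ▸ hη ⟨k, hk⟩)) (by simp; omega)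
    rw [show pFrom η k = _ from pFrom_eq_mul_swap hη ⟨k, hk⟩, Equiv.Perm.mul_apply,
      Equiv.swap_apply_of_ne_of_ne (Fin.ne_of_val_ne (by simp; omega)) hne, hq]

lemma pFrom_succ_apply_of_le {η : Fin n → Fin n} (hη : ∀ i, i ≤ η i) {k x : Fin n}
    (hx : x ≤ k) : pFrom η (k + 1) x = x :=
  pFrom_apply_of_lt hη k.is_lt (Nat.lt_succ_of_le hx)

lemma pFrom_congr {η₁ η₂ : Fin n → Fin n} (hη₁ : ∀ i, i ≤ η₁ i) (hη₂ : ∀ i, i ≤ η₂ i)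
    {k : ℕ} (hk : k ≤ n) (h : ∀ i : Fin n, k ≤ (i : ℕ) → η₁ i = η₂ i) :
    pFrom η₁ k = pFrom η₂ k := by
  induction hk using Nat.decreasingInduction with
  | self => rw [pFrom_self, pFrom_self]
  | of_succ k hk ih =>
    rw [show pFrom η₁ k = _ from pFrom_eq_mul_swap hη₁ ⟨k, hk⟩,
      show pFrom η₂ k = _ from pFrom_eq_mul_swap hη₂ ⟨k, hk⟩,
      ih fun i hi => h i (by omega), h ⟨k, hk⟩ le_rfl]

lemma pFrom_update_pFrom_succ_apply {η : Fin n → Fin n} (hη : ∀ i, i ≤ η i) {k j : Fin n}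
    (hj : k ≤ j) :
    pFrom (Function.update η k (pFrom η (k + 1) j)) k = pFrom η (k + 1) * Equiv.swap k j := by
  have hk : k ≤ pFrom η (k + 1) j :=
    Equiv.Perm.le_apply_of_forall_lt (fun x hx => pFrom_succ_apply_of_le hη hx.le) hj
  have hupd : ∀ i, i ≤ Function.update η k (pFrom η (k + 1) j) i := by
    intro i
    rcases eq_or_ne i k with rfl | hik
    · simpa using hk
    · simpa [hik] using hη i
  rw [pFrom_eq_mul_swap hupd, pFrom_congr hupd hη k.is_lt fun i hi =>
    Function.update_of_ne (by omega) _ _, Function.update_self, Equiv.Perm.coe_inv,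
    Equiv.symm_apply_apply]

lemma prod_drop_act_mul_Piop_eq_sum_of_succ (C : Fin n → Matrix (Fin n) (Fin n) A) (k : Fin n)
    (ih : (((List.finRange n).drop (k + 1)).map fun s => act (C s) s * Piop s).prod =
      ∑ η ∈ InFrom n (k + 1), alphaK η • (Pop (pFrom η (k + 1))⁻¹ *
        (((List.finRange n).drop (k + 1)).map fun s => act (C s) (η s)).prod)) :
    (((List.finRange n).drop k).map fun s => act (C s) s * Piop s).prod =
      ∑ η ∈ InFrom n k, alphaK η •
        (Pop (pFrom η k)⁻¹ * (((List.finRange n).drop k).map fun s => act (C s) (η s)).prod) := by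
  simp only [List.drop_finRange_eq_cons k, List.map_cons, List.prod_cons]
  rw [ih, sum_InFrom_eq_sum_update k, Finset.mul_sum]
  refine Finset.sum_congr rfl fun η hη => ?_
  obtain ⟨hηI, hηfix⟩ := Finset.mem_filter.1 hη
  rw [mem_In] at hηI
  have hq : ∀ x ≤ k, pFrom η (k + 1) x = x := fun x hx => pFrom_succ_apply_of_le hηI hx
  rw [← Equiv.Perm.sum_Ici_comp (fun x hx => hq x hx.le), Piop_eq_sum, Finset.mul_sum,
    Finset.sum_mul]
  refine Finset.sum_congr rfl fun j hj => ?_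
  have hj : k ≤ j := Finset.mem_Ici.1 hj
  rw [Function.update_self, prod_drop_succ_map_act_update, pFrom_update_pFrom_succ_apply hηI hj,
    alphaK_update (hηfix k (by omega)) (Equiv.Perm.le_apply_of_forall_lt
      (fun x hx => hq x hx.le) hj), piCoeff_perm_apply (hq k le_rfl)]
  simp only [mul_smul_comm, smul_mul_assoc, smul_smul]
  rw [mul_comm (alphaK η), act_mul_Pop_swap_mul]

lemma prod_drop_act_mul_Piop_eq_sum (C : Fin n → Matrix (Fin n) (Fin n) A) {k : ℕ}
    (hk : k ≤ n) :
    (((List.finRange n).drop k).map fun s => act (C s) s * Piop s).prod =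
      ∑ η ∈ InFrom n k, alphaK η •
        (Pop (pFrom η k)⁻¹ * (((List.finRange n).drop k).map fun s => act (C s) (η s)).prod) := by
  induction hk using Nat.decreasingInduction with
  | self =>
    have hα : alphaK (id : Fin n → Fin n) = 1 := by simp [alphaK]
    simp [List.drop_of_length_le, InFrom_self, hα, pFrom_self, Pop_one]
  | of_succ k hk ih => exact prod_drop_act_mul_Piop_eq_sum_of_succ C ⟨k, hk⟩ ih

theorem braket_eq_sum_pEta_general (C : Fin n → Matrix (Fin n) (Fin n) A) :
    braket C =
      ∑ η ∈ In n, alphaK η •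
        (Pop (pEta η)⁻¹ * ((List.finRange n).map (fun s => act (C s) (η s))).prod) := by
  simpa [braket, InFrom_zero, pFrom_zero] using prod_drop_act_mul_Piop_eq_sum C (Nat.zero_le n)

theorem braket_eq_sum_pEta (hn : 1 ≤ n) (C : Fin n → Matrix (Fin n) (Fin n) A) :
    braket C =
      ∑ η ∈ In n, alphaK η •
        (Pop (pEta η)⁻¹ * ((List.finRange n).map (fun s => act (C s) (η s))).prod) :=
  braket_eq_sum_pEta_general C

end
end

section
/- For κ ∈ I_n define η(κ) : {1,…,n} → {1,…,n} by η(κ)(i) := ((n,κ(n))∘(n−1,κ(n−1))∘⋯∘(i,κ(i)))(i), where the composition applies (i,κ(i)) first. Then η(κ) ∈ I_n for every κ ∈ I_n (i.e. i ≤ η(κ)(i) for all i), and the map κ ↦ η(κ) is a bijection from I_n to itself. -/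
/-!
STATEMENT 15: For κ ∈ I_n define η(κ)(i) := ((n,κ(n))∘⋯∘(i,κ(i)))(i).
Then η(κ) ∈ I_n for every κ ∈ I_n, and κ ↦ η(κ) is a bijection from I_n
to itself.
-/

/-- q_κ^{[i]} = (n,κ(n))∘(n−1,κ(n−1))∘⋯∘(i,κ(i)), rightmost factor applied first. -/
def qk {n : ℕ} (κ : Fin n → Fin n) (i : Fin n) : Equiv.Perm (Fin n) :=
  ((((List.finRange n).filter (fun j => decide (i ≤ j))).reverse).map
    (fun j => Equiv.swap j (κ j))).prod

/-- η(κ)(i) = ((n,κ(n))∘⋯∘(i,κ(i)))(i). -/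
def etaMap {n : ℕ} (κ : Fin n → Fin n) : Fin n → Fin n :=
  fun i => qk κ i i

/-!
Splitting off the factor applied first, `q_κ^{[i]} = q_κ^{[>i]} ∘ (i, κ(i))`, so `η(κ)(i) = q_κ^{[>i]}(κ(i))`.
For `κ ∈ I_n` every transposition `(j, κ(j))` with `j > i` fixes `{1,…,i}` pointwise, so the
permutation `q_κ^{[>i]}` fixes `{1,…,i}` and hence preserves `{i+1,…,n}`; this gives `i ≤ η(κ)(i)`.
Since `q_κ^{[>i]}` only depends on `κ` above `i`, `κ` is recovered from `η(κ)` by downward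
induction on `i`, and an injective self-map of the finite set `I_n` is a bijection.
-/

lemma List.filter_le_eq_cons_filter_lt {α : Type*} [LinearOrder α] {l : List α}
    (hl : l.Pairwise (· < ·)) {i : α} (hi : i ∈ l) :
    l.filter (fun j => decide (i ≤ j)) = i :: l.filter (fun j => decide (i < j)) := by
  induction l with
  | nil => simp at hi
  | cons a tl ih =>
    obtain ⟨ha, htl⟩ := List.pairwise_cons.mp hl
    rcases List.mem_cons.mp hi with rfl | hi
    · have hle : tl.filter (fun j => decide (i ≤ j)) = tl :=
        List.filter_eq_self.mpr fun b hb => by simp [(ha b hb).le]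
      have hlt : tl.filter (fun j => decide (i < j)) = tl :=
        List.filter_eq_self.mpr fun b hb => by simp [ha b hb]
      simp [hle, hlt]
    · have hai : a < i := ha i hi
      simp only [List.filter_cons, decide_eq_true_eq, if_neg (not_le.mpr hai),
        if_neg (not_lt.mpr hai.le)]
      exact ih htl hi

section

variable {n : ℕ}

/-- `(n,κ(n)) ∘ ⋯ ∘ (i+1,κ(i+1))`, i.e. `qk κ i` without its first factor `(i,κ(i))`. -/
def qkAbove (κ : Fin n → Fin n) (i : Fin n) : Equiv.Perm (Fin n) :=
  ((((List.finRange n).filter (fun j => decide (i < j))).reverse).map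
    (fun j => Equiv.swap j (κ j))).prod

lemma qk_eq_qkAbove_mul (κ : Fin n → Fin n) (i : Fin n) :
    qk κ i = qkAbove κ i * Equiv.swap i (κ i) := by
  rw [qk, qkAbove, List.filter_le_eq_cons_filter_lt (List.pairwise_lt_finRange n)
    (List.mem_finRange i)]
  simp

lemma etaMap_eq_qkAbove (κ : Fin n → Fin n) (i : Fin n) :
    etaMap κ i = qkAbove κ i (κ i) := by
  simp [etaMap, qk_eq_qkAbove_mul]

lemma qkAbove_congr {κ κ' : Fin n → Fin n} {i : Fin n} (h : ∀ j, i < j → κ j = κ' j) :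
    qkAbove κ i = qkAbove κ' i := by
  unfold qkAbove
  congr 1
  refine List.map_congr_left fun j hj => ?_
  rw [h j (by simpa using (List.mem_filter.mp (List.mem_reverse.mp hj)).2)]

variable {κ : Fin n → Fin n}

lemma qkAbove_apply_of_le (hκ : ∀ i, i ≤ κ i) {i x : Fin n} (hx : x ≤ i) :
    qkAbove κ i x = x := by
  suffices qkAbove κ i ∈ MulAction.stabilizer (Equiv.Perm (Fin n)) x from this
  refine Subgroup.list_prod_mem _ fun σ hσ => ?_
  obtain ⟨j, hj, rfl⟩ := List.mem_map.mp hσ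
  have hij : i < j := by simpa using (List.mem_filter.mp (List.mem_reverse.mp hj)).2
  exact Equiv.swap_apply_of_ne_of_ne (hx.trans_lt hij).ne
    (hx.trans_lt (hij.trans_le (hκ j))).ne

lemma lt_qkAbove_apply (hκ : ∀ i, i ≤ κ i) {i x : Fin n} (hx : i < x) :
    i < qkAbove κ i x := by
  by_contra! h
  have hfix : qkAbove κ i x = x :=
    (qkAbove κ i).injective (qkAbove_apply_of_le hκ h)
  exact hx.not_ge (hfix ▸ h)

lemma le_etaMap (hκ : ∀ i, i ≤ κ i) (i : Fin n) : i ≤ etaMap κ i := by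
  rw [etaMap_eq_qkAbove]
  rcases (hκ i).eq_or_lt with h | h
  · rw [← h, qkAbove_apply_of_le hκ le_rfl]
  · exact (lt_qkAbove_apply hκ h).le

end

lemma etaMap_injective {n : ℕ} : Function.Injective (@etaMap n) := by
  intro κ κ' heq
  funext i
  induction i using WellFoundedGT.induction with
  | _ i ih =>
    apply (qkAbove κ i).injective
    rw [← etaMap_eq_qkAbove, heq, etaMap_eq_qkAbove, qkAbove_congr ih]

theorem etaMap_mem_and_bijOn (n : ℕ) :
    (∀ κ : Fin n → Fin n, (∀ i, i ≤ κ i) → ∀ i, i ≤ etaMap κ i) ∧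
    Set.BijOn etaMap {κ : Fin n → Fin n | ∀ i, i ≤ κ i}
      {η : Fin n → Fin n | ∀ i, i ≤ η i} := by
  have hmaps : Set.MapsTo etaMap {κ : Fin n → Fin n | ∀ i, i ≤ κ i}
      {η : Fin n → Fin n | ∀ i, i ≤ η i} := fun _ hκ => le_etaMap hκ
  exact ⟨fun _ hκ => le_etaMap hκ,
    ((Set.toFinite _).injOn_iff_bijOn_of_mapsTo hmaps).mp etaMap_injective.injOn⟩
end

section
/- Let κ ∈ I_n and let σ := (n,κ(n))∘(n−1,κ(n−1))∘⋯∘(1,κ(1)) ∈ S_n. Then for each i ∈ {1,…,n}, κ(i) = i if and only if i is the maximal element of the cycle of σ containing i, i.e. every j with σ.SameCycle i j satisfies j ≤ i. -/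
/-!
STATEMENT 17: For κ ∈ I_n and σ := (n,κ(n))∘(n−1,κ(n−1))∘⋯∘(1,κ(1)),
κ(i) = i iff i is the maximal element of its σ-cycle, i.e. every j with
σ.SameCycle i j satisfies j ≤ i.
-/

set_option linter.unusedSectionVars false

section aux
variable {α : Type*} [DecidableEq α] [Fintype α]

lemma sameCycle_fixed {τ : Equiv.Perm α} {m j : α} (hm : τ m = m)
    (h : τ.SameCycle m j) : j = m := by
  obtain ⟨z, hz⟩ := h
  rw [Equiv.Perm.zpow_apply_eq_self_of_apply_eq_self hm] at hz
  exact hz.symm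

lemma pow_ne_fixed {τ : Equiv.Perm α} {m i : α} (hm : τ m = m) (hi : i ≠ m) (k : ℕ) :
    (τ ^ k) i ≠ m := by
  intro h
  have h2 : (τ ^ k) m = m := Equiv.Perm.pow_apply_eq_self_of_apply_eq_self hm k
  exact hi ((τ ^ k).injective (h.trans h2.symm))

/-- Inserting m into the cycle of a: τ-same-cycle implies σ-same-cycle. -/
lemma sameCycle_mul_swap_of_sameCycle {τ : Equiv.Perm α} {m a : α} (hm : τ m = m)
    {i j : α} (hi : i ≠ m) (h : τ.SameCycle i j) :
    (τ * Equiv.swap m a).SameCycle i j := by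
  have hstep : ∀ x : α, x ≠ m → (τ * Equiv.swap m a).SameCycle x (τ x) := by
    intro x hx
    by_cases hxa : x = a
    · have h1 : (τ * Equiv.swap m a) x = m := by
        rw [Equiv.Perm.mul_apply, hxa, Equiv.swap_apply_right, hm]
      have h2 : (τ * Equiv.swap m a) m = τ x := by
        rw [Equiv.Perm.mul_apply, Equiv.swap_apply_left, hxa]
      exact ⟨2, by rw [show (2:ℤ) = ((2:ℕ):ℤ) by norm_num, zpow_natCast,
        pow_succ, pow_one, Equiv.Perm.mul_apply, h1, h2]⟩
    · exact ⟨1, by rw [zpow_one, Equiv.Perm.mul_apply,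
        Equiv.swap_apply_of_ne_of_ne hx hxa]⟩
  obtain ⟨k, -, hk⟩ := h.exists_pow_eq'
  subst hk
  clear h
  induction k with
  | zero => simpa using Equiv.Perm.SameCycle.refl _ _
  | succ k ih =>
    have hx : (τ ^ k) i ≠ m := pow_ne_fixed hm hi k
    have h3 := ih.trans (hstep _ hx)
    simpa [pow_succ', Equiv.Perm.mul_apply] using h3

/-- Removing m from the cycle: σ-same-cycle implies τ-same-cycle away from m. -/
lemma sameCycle_of_sameCycle_mul_swap {τ : Equiv.Perm α} {m a : α} (hm : τ m = m)
    {i j : α} (hi : i ≠ m) (hj : j ≠ m)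
    (h : (τ * Equiv.swap m a).SameCycle i j) : τ.SameCycle i j := by
  set σ := τ * Equiv.swap m a with hσ
  have hσa : σ a = m := by rw [hσ, Equiv.Perm.mul_apply, Equiv.swap_apply_right, hm]
  have hσm : σ m = τ a := by rw [hσ, Equiv.Perm.mul_apply, Equiv.swap_apply_left]
  have hσx : ∀ x : α, x ≠ m → x ≠ a → σ x = τ x := by
    intro x h1 h2; rw [hσ, Equiv.Perm.mul_apply, Equiv.swap_apply_of_ne_of_ne h1 h2]
  suffices H : ∀ k : ℕ, (σ ^ k) i ≠ m → τ.SameCycle i ((σ ^ k) i) by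
    obtain ⟨k, -, hk⟩ := h.exists_pow_eq'
    have := H k (hk ▸ hj)
    rwa [hk] at this
  intro k
  induction k using Nat.strong_induction_on with
  | _ k ih =>
    rcases k with _ | k
    · intro _; simpa using Equiv.Perm.SameCycle.refl _ _
    intro hjm
    by_cases hy : (σ ^ k) i = m
    · rcases k with _ | k'
      · simp at hy; exact absurd hy hi
      · have hya : (σ ^ k') i = a := by
          rw [pow_succ', Equiv.Perm.mul_apply] at hy
          exact σ.injective (hy.trans hσa.symm)
        have hane : a ≠ m := by
          intro h'
          have hσmm : σ m = m := by rw [hσm, h', hm]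
          exact pow_ne_fixed hσmm hi k' (h' ▸ hya)
        have h1 : τ.SameCycle i a := by
          have := ih k' (by omega) (by rw [hya]; exact hane)
          rwa [hya] at this
        have e1 : (σ ^ (k' + 1 + 1)) i = τ a := by
          rw [pow_succ', Equiv.Perm.mul_apply, hy, hσm]
        rw [e1]
        exact h1.trans ⟨1, by simp⟩
    · have h1 := ih k (by omega) hy
      have hya : (σ ^ k) i ≠ a := by
        intro h'
        have : (σ ^ (k + 1)) i = m := by
          rw [pow_succ', Equiv.Perm.mul_apply, h', hσa]
        exact hjm this
      have e2 : (σ ^ (k + 1)) i = τ ((σ ^ k) i) := by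
        rw [pow_succ', Equiv.Perm.mul_apply, hσx _ hy hya]
      rw [e2]
      exact h1.trans ⟨1, by simp⟩
end aux


/-- The product (n,κ(n))∘(n−1,κ(n−1))∘⋯∘(1,κ(1)), rightmost factor applied first. -/
def permOf {n : ℕ} (κ : Fin n → Fin n) : Equiv.Perm (Fin n) :=
  (((List.finRange n).reverse).map (fun j => Equiv.swap j (κ j))).prod

/-- Partial product of the swaps with indices ≥ m. -/
def sigmaFrom {n : ℕ} (κ : Fin n → Fin n) (m : ℕ) : Equiv.Perm (Fin n) :=
  ((((List.finRange n).drop m).map (fun j => Equiv.swap j (κ j))).reverse).prod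

lemma permOf_eq_sigmaFrom {n : ℕ} (κ : Fin n → Fin n) : permOf κ = sigmaFrom κ 0 := by
  simp [permOf, sigmaFrom, List.map_reverse]

lemma sigmaFrom_succ {n : ℕ} (κ : Fin n → Fin n) {m : ℕ} (hm : m < n) :
    sigmaFrom κ m = sigmaFrom κ (m + 1) * Equiv.swap ⟨m, hm⟩ (κ ⟨m, hm⟩) := by
  have hlen : m < (List.finRange n).length := by simpa using hm
  rw [sigmaFrom, List.drop_eq_getElem_cons hlen, List.map_cons, List.reverse_cons,
    List.prod_append, List.prod_singleton, List.getElem_finRange]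
  rfl

lemma sigmaFrom_top {n : ℕ} (κ : Fin n → Fin n) : sigmaFrom κ n = 1 := by
  have : (List.finRange n).drop n = [] := by
    apply List.drop_eq_nil_of_le; simp
  simp [sigmaFrom, this]

lemma sigmaFrom_fix {n : ℕ} (κ : Fin n → Fin n) (hκ : ∀ i, i ≤ κ i) :
    ∀ (d m : ℕ), m + d = n → ∀ x : Fin n, (x : ℕ) < m → sigmaFrom κ m x = x := by
  intro d
  induction d with
  | zero => intro m hmn x hx; subst hmn; simp [sigmaFrom_top]
  | succ d ih =>
    intro m hmn x hx
    have hm : m < n := by omega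
    rw [sigmaFrom_succ κ hm, Equiv.Perm.mul_apply]
    have h1 : x ≠ (⟨m, hm⟩ : Fin n) := by
      intro h; rw [h] at hx; exact absurd hx (by simp)
    have h2 : x ≠ κ ⟨m, hm⟩ := by
      intro h
      have := hκ (⟨m, hm⟩ : Fin n)
      rw [Fin.le_def] at this
      rw [h] at hx
      have hmm : ((⟨m, hm⟩ : Fin n) : ℕ) = m := rfl
      omega
    rw [Equiv.swap_apply_of_ne_of_ne h1 h2]
    exact ih (m + 1) (by omega) x (by omega)

theorem fixed_iff_cycle_max (n : ℕ) (κ : Fin n → Fin n) (hκ : ∀ i, i ≤ κ i)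
    (i : Fin n) :
    κ i = i ↔ ∀ j, (permOf κ).SameCycle i j → j ≤ i := by
  rw [permOf_eq_sigmaFrom]
  suffices H : ∀ (d m : ℕ), m + d = n → ∀ i : Fin n, m ≤ (i : ℕ) →
      (κ i = i ↔ ∀ j, (sigmaFrom κ m).SameCycle i j → j ≤ i) by
    exact H n 0 (by omega) i (Nat.zero_le _)
  intro d
  induction d with
  | zero => intro m hmn i hmi; exact absurd i.isLt (by omega)
  | succ d ih =>
    intro m hmn i hmi
    have hm : m < n := by omega
    have hfixM : sigmaFrom κ (m + 1) ⟨m, hm⟩ = ⟨m, hm⟩ :=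
      sigmaFrom_fix κ hκ d (m + 1) (by omega) ⟨m, hm⟩ (Nat.lt_succ_self m)
    rw [sigmaFrom_succ κ hm]
    by_cases hMi : i = (⟨m, hm⟩ : Fin n)
    · rw [← hMi] at hfixM ⊢
      by_cases hA : κ i = i
      · have hswap : Equiv.swap i (κ i) = Equiv.refl (Fin n) := by rw [hA, Equiv.swap_self]
        rw [hswap]
        constructor
        · intro _ j hc
          have h2 : (sigmaFrom κ (m + 1)).SameCycle i j := by
            rwa [show sigmaFrom κ (m + 1) * Equiv.refl (Fin n) = sigmaFrom κ (m + 1)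
              from mul_one _] at hc
          exact le_of_eq (sameCycle_fixed hfixM h2)
        · intro _; exact hA
      · constructor
        · intro h; exact absurd h hA
        · intro hmax
          exfalso
          have hc : (sigmaFrom κ (m + 1) * Equiv.swap i (κ i)).SameCycle i (κ i) := by
            refine Equiv.Perm.SameCycle.symm ⟨1, ?_⟩
            rw [zpow_one, Equiv.Perm.mul_apply, Equiv.swap_apply_right, hfixM]
          exact hA (le_antisymm (hmax (κ i) hc) (hκ i))
    · have hne : (i : ℕ) ≠ m := fun h => hMi (Fin.ext h)
      have hIgt : m + 1 ≤ (i : ℕ) := by omega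
      rw [ih (m + 1) (by omega) i hIgt]
      constructor
      · intro hmax j hc
        by_cases hjM : j = (⟨m, hm⟩ : Fin n)
        · subst hjM
          rw [Fin.le_def]
          have hmm : ((⟨m, hm⟩ : Fin n) : ℕ) = m := rfl
          omega
        · exact hmax j (sameCycle_of_sameCycle_mul_swap hfixM hMi hjM hc)
      · intro hmax j hc
        exact hmax j (sameCycle_mul_swap_of_sameCycle hfixM hMi hc)
end
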